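/- arXiv:1608.05165 — 4 statements merged into one kernel-verified Lean document; each statement's English description precedes it below -/
import Mathlib

section
/- Let S be a semigroup and let H be an H-class of S (an equivalence class of Green's relation ℋ = ℒ ∧ ℛ). If there exist a, b ∈ H with a·b ∈ H, then H·H = H and H is a subgroup of S (i.e., H is closed under multiplication and forms a group under the multiplication of S). -/
/-- Green's relation ℒ on a semigroup. -/
def grL {S : Type*} [Semigroup S] (x y : S) : Prop :=
  ({z | ∃ s, z = s * x} ∪ {x}) = ({z | ∃ s, z = s * y} ∪ {y})

/-- Green's relation ℛ on a semigroup. -/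
def grR {S : Type*} [Semigroup S] (x y : S) : Prop :=
  ({z | ∃ s, z = x * s} ∪ {x}) = ({z | ∃ s, z = y * s} ∪ {y})

/-- Green's relation ℋ on a semigroup. -/
def grH {S : Type*} [Semigroup S] (x y : S) : Prop := grL x y ∧ grR x y

/-- Green's relation 𝒟 on a semigroup. -/
def grD {S : Type*} [Semigroup S] (x y : S) : Prop := ∃ z, grL x z ∧ grR z y

/-- Regular element of a semigroup. -/
def grReg {S : Type*} [Semigroup S] (x : S) : Prop := ∃ y, x * y * x = x

/-!
Adjoining an identity turns ℒ, ℛ, ℋ into equality of the principal ideals `Mx`, `xM` of the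
monoid `M = S¹`. There the argument is Green's: since `a ℛ ab`, right multiplication by `b` is
undone by some `t` on the whole ℒ-class of `a`, hence `x ↦ xb` maps `H` into `H`; dually
`y ↦ xy` maps `H` into `H` once `xb ∈ H`. So `H` is closed under multiplication. Then for
`x ∈ H`, `x ℛ x²` and `x ℒ x²` give `x = x²u = vx²`, and `xu = vx` is an identity of `H`;
inverses come from writing that identity as an element of `xM ∩ Mx`.
-/

section Monoid

variable {M : Type*} [Monoid M] {x y z a b e i s : M}

def greenL (x y : M) : Prop := Set.range (· * x) = Set.range (· * y)

def greenR (x y : M) : Prop := Set.range (x * ·) = Set.range (y * ·)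

def greenH (x y : M) : Prop := greenL x y ∧ greenR x y

theorem greenL_iff : greenL x y ↔ (∃ u, x = u * y) ∧ (∃ u, y = u * x) := by
  refine ⟨fun h => ⟨?_, ?_⟩, fun ⟨⟨u, hu⟩, ⟨v, hv⟩⟩ => ?_⟩
  · obtain ⟨u, hu⟩ : x ∈ Set.range (· * y) := h ▸ ⟨1, one_mul x⟩
    exact ⟨u, hu.symm⟩
  · obtain ⟨u, hu⟩ : y ∈ Set.range (· * x) := h ▸ ⟨1, one_mul y⟩
    exact ⟨u, hu.symm⟩
  · refine Set.Subset.antisymm ?_ ?_ <;> rintro _ ⟨w, rfl⟩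
    exacts [⟨w * u, by simp [hu, mul_assoc]⟩, ⟨w * v, by simp [hv, mul_assoc]⟩]

theorem greenR_iff : greenR x y ↔ (∃ u, x = y * u) ∧ (∃ u, y = x * u) := by
  refine ⟨fun h => ⟨?_, ?_⟩, fun ⟨⟨u, hu⟩, ⟨v, hv⟩⟩ => ?_⟩
  · obtain ⟨u, hu⟩ : x ∈ Set.range (y * ·) := h ▸ ⟨1, mul_one x⟩
    exact ⟨u, hu.symm⟩
  · obtain ⟨u, hu⟩ : y ∈ Set.range (x * ·) := h ▸ ⟨1, mul_one y⟩
    exact ⟨u, hu.symm⟩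
  · refine Set.Subset.antisymm ?_ ?_ <;> rintro _ ⟨w, rfl⟩
    exacts [⟨u * w, by simp [hu, mul_assoc]⟩, ⟨v * w, by simp [hv, mul_assoc]⟩]

theorem greenL.symm (h : greenL x y) : greenL y x := Eq.symm h

theorem greenL.trans (hxy : greenL x y) (hyz : greenL y z) : greenL x z := Eq.trans hxy hyz

theorem greenR.symm (h : greenR x y) : greenR y x := Eq.symm h

theorem greenR.trans (hxy : greenR x y) (hyz : greenR y z) : greenR x z := Eq.trans hxy hyz

theorem greenL.mul_right (h : greenL x y) (s : M) : greenL (x * s) (y * s) := by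
  obtain ⟨⟨u, hu⟩, ⟨v, hv⟩⟩ := greenL_iff.1 h
  exact greenL_iff.2 ⟨⟨u, by rw [hu, mul_assoc]⟩, ⟨v, by rw [hv, mul_assoc]⟩⟩

theorem greenR.mul_left (h : greenR x y) (s : M) : greenR (s * x) (s * y) := by
  obtain ⟨⟨u, hu⟩, ⟨v, hv⟩⟩ := greenR_iff.1 h
  exact greenR_iff.2 ⟨⟨u, by rw [hu, mul_assoc]⟩, ⟨v, by rw [hv, mul_assoc]⟩⟩

/-- Green's lemma: if `a * s * t = a`, then `x * s * t = x` for all `x ∈ M * a`. -/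
theorem greenR_mul_right_of_greenL (hxa : greenL x a) (has : greenR a (a * s)) :
    greenR x (x * s) := by
  obtain ⟨u, rfl⟩ := (greenL_iff.1 hxa).1
  obtain ⟨t, ht⟩ := (greenR_iff.1 has).1
  exact greenR_iff.2 ⟨⟨t, by rw [mul_assoc, mul_assoc, ← mul_assoc a, ← ht]⟩, ⟨s, rfl⟩⟩

theorem greenL_mul_left_of_greenR (hxa : greenR x a) (has : greenL a (s * a)) :
    greenL x (s * x) := by
  obtain ⟨u, rfl⟩ := (greenR_iff.1 hxa).1
  obtain ⟨t, ht⟩ := (greenL_iff.1 has).1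
  exact greenL_iff.2 ⟨⟨t, by rw [← mul_assoc, ← mul_assoc, mul_assoc t, ← ht]⟩, ⟨s, rfl⟩⟩

theorem greenH.mul_right_of_mul (ha : greenH a e) (hab : greenH (a * b) e) (hx : greenH x e) :
    greenH (x * b) e := by
  have hxa : greenL x a := hx.1.trans ha.1.symm
  have hx_xb : greenR x (x * b) :=
    greenR_mul_right_of_greenL hxa (ha.2.trans hab.2.symm)
  exact ⟨(hxa.mul_right b).trans hab.1, hx_xb.symm.trans hx.2⟩

theorem greenH.mul_left_of_mul (hb : greenH b e) (hab : greenH (a * b) e) (hy : greenH y e) :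
    greenH (a * y) e := by
  have hyb : greenR y b := hy.2.trans hb.2.symm
  have hy_ay : greenL y (a * y) :=
    greenL_mul_left_of_greenR hyb (hb.1.trans hab.1.symm)
  exact ⟨hy_ay.symm.trans hy.1, (hyb.mul_left a).trans hab.2⟩

theorem greenH.mul_of_mul (ha : greenH a e) (hb : greenH b e) (hab : greenH (a * b) e)
    (hx : greenH x e) (hy : greenH y e) : greenH (x * y) e :=
  hb.mul_left_of_mul (ha.mul_right_of_mul hab hx) hy

theorem greenH.exists_one (hx : greenH x e) (hxx : greenH (x * x) e) :
    ∃ i, greenH i e ∧ ∀ y, greenH y e → i * y = y ∧ y * i = y := by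
  obtain ⟨u, hu⟩ := (greenR_iff.1 (hx.2.trans hxx.2.symm)).1
  obtain ⟨v, hv⟩ := (greenL_iff.1 (hx.1.trans hxx.1.symm)).1
  have hxxu : x * (x * u) = x := by rw [← mul_assoc, ← hu]
  have hvxx : v * x * x = x := by rw [mul_assoc, ← hv]
  have hxu_eq_vx : x * u = v * x := calc
    x * u = v * x * x * u := by rw [hvxx]
    _ = v * x := by rw [mul_assoc (v * x), mul_assoc v, hxxu]
  refine ⟨x * u, ⟨?_, ?_⟩, fun y hy => ⟨?_, ?_⟩⟩
  · exact (greenL_iff.2 ⟨⟨v, hxu_eq_vx⟩, ⟨x, hxxu.symm⟩⟩).trans hx.1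
  · exact (greenR_iff.2 ⟨⟨u, rfl⟩, ⟨x, by rw [hxu_eq_vx, hvxx]⟩⟩).trans hx.2
  · obtain ⟨w, rfl⟩ := (greenR_iff.1 (hy.2.trans hx.2.symm)).1
    rw [← mul_assoc, hxu_eq_vx, hvxx]
  · obtain ⟨w, rfl⟩ := (greenL_iff.1 (hy.1.trans hx.1.symm)).1
    rw [mul_assoc, hxxu]

theorem greenH.exists_inv (hi : greenH i e) (hone : ∀ y, greenH y e → i * y = y ∧ y * i = y)
    (hx : greenH x e) : ∃ y, greenH y e ∧ x * y = i ∧ y * x = i := by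
  have hii : i * i = i := (hone i hi).1
  obtain ⟨u, hu⟩ := (greenR_iff.1 (hi.2.trans hx.2.symm)).1
  obtain ⟨v, hv⟩ := (greenL_iff.1 (hi.1.trans hx.1.symm)).1
  have hright : x * (i * u * i) = i := by
    rw [← mul_assoc, ← mul_assoc, (hone x hx).2, ← hu, hii]
  have hleft : i * v * i * x = i := by
    rw [mul_assoc _ i x, (hone x hx).1, mul_assoc, ← hv, hii]
  -- the left inverse `i * v * i` and the right inverse `i * u * i` coincide, as in a group
  have hinv_eq : i * v * i = i * u * i := calc
    i * v * i = i * v * i * (x * (i * u * i)) := by rw [hright, mul_assoc _ i i, hii]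
    _ = i * u * i := by rw [← mul_assoc, hleft, ← mul_assoc, ← mul_assoc, hii]
  refine ⟨i * u * i, ⟨?_, ?_⟩, hright, hinv_eq ▸ hleft⟩
  · exact (greenL_iff.2 ⟨⟨i * u, rfl⟩, ⟨x, hright.symm⟩⟩).trans hi.1
  · exact (greenR_iff.2 ⟨⟨u * i, mul_assoc _ _ _⟩, ⟨x, (hinv_eq ▸ hleft).symm⟩⟩).trans hi.2

end Monoid

section Transfer

variable {S : Type*} [Semigroup S]

theorem image_coe_leftPrincipal (x : S) :
    ((↑) : S → WithOne S) '' ({z | ∃ s, z = s * x} ∪ {x}) = Set.range (· * (x : WithOne S)) := by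
  ext y
  induction y using WithOne.cases_on <;> simp [WithOne.exists, ← WithOne.coe_mul, eq_comm]

theorem image_coe_rightPrincipal (x : S) :
    ((↑) : S → WithOne S) '' ({z | ∃ s, z = x * s} ∪ {x}) = Set.range ((x : WithOne S) * ·) := by
  ext y
  induction y using WithOne.cases_on <;> simp [WithOne.exists, ← WithOne.coe_mul, eq_comm]

theorem grL_iff_greenL_coe {x y : S} : grL x y ↔ greenL (x : WithOne S) y := by
  rw [greenL, ← image_coe_leftPrincipal, ← image_coe_leftPrincipal,
    (Set.image_injective.2 WithOne.coe_injective).eq_iff, grL]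

theorem grR_iff_greenR_coe {x y : S} : grR x y ↔ greenR (x : WithOne S) y := by
  rw [greenR, ← image_coe_rightPrincipal, ← image_coe_rightPrincipal,
    (Set.image_injective.2 WithOne.coe_injective).eq_iff, grR]

theorem grH_iff_greenH_coe {x y : S} : grH x y ↔ greenH (x : WithOne S) y :=
  and_congr grL_iff_greenL_coe grR_iff_greenR_coe

theorem greenR.exists_coe {y : WithOne S} {e : S} (h : greenR y e) : ∃ x : S, ↑x = y := by
  have hy : y ∈ Set.range ((e : WithOne S) * ·) := h ▸ ⟨1, mul_one y⟩
  rw [← image_coe_rightPrincipal] at hy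
  obtain ⟨x, -, hx⟩ := hy
  exact ⟨x, hx⟩

end Transfer

/-- If an ℋ-class `H` contains two elements whose product is again in `H`,
then `H · H = H` and `H` is a subgroup of `S`. -/
theorem Hclass_group_of_mul_mem {S : Type*} [Semigroup S] (e : S) (H : Set S)
    (hH : H = {x | grH x e}) (a b : S) (ha : a ∈ H) (hb : b ∈ H) (hab : a * b ∈ H) :
    (∀ x ∈ H, ∀ y ∈ H, x * y ∈ H) ∧
    (∀ z ∈ H, ∃ x ∈ H, ∃ y ∈ H, z = x * y) ∧
    (∃ i ∈ H, (∀ x ∈ H, i * x = x ∧ x * i = x) ∧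
      ∀ x ∈ H, ∃ y ∈ H, x * y = i ∧ y * x = i) := by
  have hmem (x : S) : x ∈ H ↔ greenH (x : WithOne S) e := hH ▸ grH_iff_greenH_coe
  have hmul : ∀ x ∈ H, ∀ y ∈ H, x * y ∈ H := fun x hx y hy =>
    (hmem _).2 <| ((hmem a).1 ha).mul_of_mul ((hmem b).1 hb) ((hmem _).1 hab)
      ((hmem x).1 hx) ((hmem y).1 hy)
  obtain ⟨i', hi, hone⟩ := ((hmem a).1 ha).exists_one ((hmem _).1 (hmul a ha a ha))
  obtain ⟨i, rfl⟩ := hi.2.exists_coe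
  refine ⟨hmul, fun z hz => ⟨i, (hmem i).2 hi, z, hz, ?_⟩, i, (hmem i).2 hi,
    fun x hx => ?_, fun x hx => ?_⟩
  · exact WithOne.coe_injective (hone z ((hmem z).1 hz)).1.symm
  · exact ⟨WithOne.coe_injective (hone x ((hmem x).1 hx)).1,
      WithOne.coe_injective (hone x ((hmem x).1 hx)).2⟩
  · obtain ⟨y', hy, hxy, hyx⟩ := hi.exists_inv hone ((hmem x).1 hx)
    obtain ⟨y, rfl⟩ := hy.2.exists_coe
    exact ⟨y, (hmem y).2 hy, WithOne.coe_injective hxy, WithOne.coe_injective hyx⟩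
end

section
/- Let S be a semigroup and let e, f ∈ S be idempotents (e·e = e and f·f = f). Then e 𝒟 f if and only if there exist a, a' ∈ S such that a·a'·a = a, a'·a·a' = a', a·a' = e, and a'·a = f. -/
/-- Two idempotents are 𝒟-related iff there is an element `a` with an inverse `a'`
such that `a * a' = e` and `a' * a = f`. -/
theorem idempotents_D_iff {S : Type*} [Semigroup S] (e f : S)
    (he : e * e = e) (hf : f * f = f) :
    grD e f ↔ ∃ a a' : S, a * a' * a = a ∧ a' * a * a' = a' ∧ a * a' = e ∧ a' * a = f := by
  constructor
  · rintro ⟨z, hL, hR⟩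
    -- z ∈ Se ∪ {e} : hence z * e = z
    have hzmem : z ∈ ({w | ∃ s, w = s * e} ∪ {e} : Set S) := by
      rw [hL]; right; rfl
    have hze : z * e = z := by
      rcases hzmem with ⟨u, hu⟩ | hu
      · rw [hu, mul_assoc, he]
      · simp only [Set.mem_singleton_iff] at hu
        rw [hu, he]
    -- e ∈ Sz ∪ {z} : hence ∃ t, t * z = e
    have hemem : e ∈ ({w | ∃ s, w = s * z} ∪ {z} : Set S) := by
      rw [← hL]; right; rfl
    obtain ⟨t, ht⟩ : ∃ t, t * z = e := by
      rcases hemem with ⟨u, hu⟩ | hu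
      · exact ⟨u, hu.symm⟩
      · simp only [Set.mem_singleton_iff] at hu
        exact ⟨e, by rw [← hu, he]⟩
    -- z ∈ fS ∪ {f} : hence f * z = z
    have hzmem' : z ∈ ({w | ∃ s, w = f * s} ∪ {f} : Set S) := by
      rw [← hR]; right; rfl
    have hfz : f * z = z := by
      rcases hzmem' with ⟨u, hu⟩ | hu
      · rw [hu, ← mul_assoc, hf]
      · simp only [Set.mem_singleton_iff] at hu
        rw [hu, hf]
    -- f ∈ zS ∪ {z} : hence ∃ s, z * s = f
    have hfmem : f ∈ ({w | ∃ s, w = z * s} ∪ {z} : Set S) := by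
      rw [hR]; right; rfl
    obtain ⟨s, hs⟩ : ∃ s, z * s = f := by
      rcases hfmem with ⟨u, hu⟩ | hu
      · exact ⟨u, hu.symm⟩
      · simp only [Set.mem_singleton_iff] at hu
        exact ⟨f, by rw [← hu, hf]⟩
    have h1 : e * t * f * z = e := by
      rw [mul_assoc (e * t) f z, hfz, mul_assoc, ht, he]
    have h2 : z * (e * t * f) = f := by
      calc z * (e * t * f) = z * e * t * f := by simp only [mul_assoc]
        _ = z * t * f := by rw [hze]
        _ = z * t * (z * s) := by rw [hs]
        _ = z * (t * z) * s := by simp only [mul_assoc]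
        _ = z * e * s := by rw [ht]
        _ = z * s := by rw [hze]
        _ = f := hs
    refine ⟨e * t * f, z, ?_, ?_, h1, h2⟩
    · rw [h1, ← mul_assoc, ← mul_assoc, he]
    · rw [h2, hfz]
  · rintro ⟨a, a', haa, ha'a, hae, haf⟩
    have ha'e : a' * e = a' := by rw [← hae, ← mul_assoc, ha'a]
    have hfa' : f * a' = a' := by rw [← haf, ha'a]
    refine ⟨a', ?_, ?_⟩
    · -- grL e a'
      ext w
      constructor
      · rintro (⟨u, hu⟩ | hu)
        · left; exact ⟨u * a, by rw [hu, mul_assoc, hae]⟩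
        · simp only [Set.mem_singleton_iff] at hu
          left; exact ⟨a, by rw [hu, hae]⟩
      · rintro (⟨u, hu⟩ | hu)
        · left; exact ⟨u * a', by rw [hu, mul_assoc, ha'e]⟩
        · simp only [Set.mem_singleton_iff] at hu
          left; exact ⟨a', by rw [hu, ha'e]⟩
    · -- grR a' f
      ext w
      constructor
      · rintro (⟨u, hu⟩ | hu)
        · left; exact ⟨a' * u, by rw [hu, ← mul_assoc, hfa']⟩
        · simp only [Set.mem_singleton_iff] at hu
          left; exact ⟨a', by rw [hu, hfa']⟩
      · rintro (⟨u, hu⟩ | hu)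
        · left; exact ⟨a * u, by rw [hu, ← mul_assoc, haf]⟩
        · simp only [Set.mem_singleton_iff] at hu
          left; exact ⟨a, by rw [hu, haf]⟩
end

section
/- Let X be a finite set and let R be an ℛ-class in the semigroup of bi-typed partial maps on X (with the domain-restricting composition). Then R is a regular ℛ-class (i.e., contains a regular element) if and only if R contains a partial identity id_A for some disjoint pair of subsets A = (A_ex, A_fr) of X. -/
open scoped Classical

structure BiMap (X : Type*) where
  ex : Set X
  fr : Set X
  disj : ex ∩ fr = ∅
  toFun : X → X
  eq_outside : ∀ x, x ∉ ex ∪ fr → toFun x = x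

noncomputable def BiMap.comp {X : Type*} (g f : BiMap X) : BiMap X where
  ex := {x | x ∈ f.ex ∧ f.toFun x ∈ g.ex}
  fr := {x | x ∈ f.fr ∧ f.toFun x ∈ g.fr}
  disj := by
    ext x
    constructor
    · rintro ⟨⟨h1, _⟩, h2, _⟩
      have hx : x ∈ f.ex ∩ f.fr := ⟨h1, h2⟩
      rw [f.disj] at hx
      exact hx
    · intro hx
      exact absurd hx (Set.notMem_empty x)
  toFun := fun x =>
    if (x ∈ f.ex ∧ f.toFun x ∈ g.ex) ∨ (x ∈ f.fr ∧ f.toFun x ∈ g.fr) then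
      g.toFun (f.toFun x)
    else x
  eq_outside := by
    intro x hx
    exact if_neg (fun hc => hx (by simpa using hc))

def BiMap.pid {X : Type*} (Aex Afr : Set X) (h : Aex ∩ Afr = ∅) : BiMap X :=
  ⟨Aex, Afr, h, id, fun _ _ => rfl⟩

def BiMap.glL {X : Type*} (f g : BiMap X) : Prop :=
  ({h | ∃ s, h = BiMap.comp s f} ∪ {f}) = ({h | ∃ s, h = BiMap.comp s g} ∪ {g})

def BiMap.glR {X : Type*} (f g : BiMap X) : Prop :=
  ({h | ∃ s, h = BiMap.comp f s} ∪ {f}) = ({h | ∃ s, h = BiMap.comp g s} ∪ {g})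

def BiMap.glD {X : Type*} (f g : BiMap X) : Prop :=
  ∃ h, BiMap.glL f h ∧ BiMap.glR h g

/-!
If `g ∘ h ∘ g = g`, then `e = g ∘ h` is idempotent and `ℛ`-related to `g` (`e = g ∘ h`, `g = e ∘ g`).
An idempotent `e` maps its exchangeable domain into itself and its frozen domain into itself, and
fixes its image pointwise. So the partial identity `p` on the image of `e`, with the exchangeable
part `e '' e.ex` and the frozen part `e '' e.fr`, satisfies `p ∘ e = e` and `e ∘ p = p`, whence
`p ℛ e`. Conversely every partial identity is idempotent, hence regular.
-/

namespace BiMap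

variable {X : Type*}

@[ext]
theorem ext {f g : BiMap X} (hex : f.ex = g.ex) (hfr : f.fr = g.fr)
    (hfun : f.toFun = g.toFun) : f = g := by
  cases f; cases g; simp_all

theorem mem_comp_ex {g f : BiMap X} {x : X} :
    x ∈ (comp g f).ex ↔ x ∈ f.ex ∧ f.toFun x ∈ g.ex := Iff.rfl

theorem mem_comp_fr {g f : BiMap X} {x : X} :
    x ∈ (comp g f).fr ↔ x ∈ f.fr ∧ f.toFun x ∈ g.fr := Iff.rfl

theorem comp_toFun_of_mem {g f : BiMap X} {x : X} (hx : x ∈ (comp g f).ex ∪ (comp g f).fr) :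
    (comp g f).toFun x = g.toFun (f.toFun x) :=
  if_pos hx

theorem comp_assoc (a b c : BiMap X) : comp (comp a b) c = comp a (comp b c) := by
  have hex : (comp (comp a b) c).ex = (comp a (comp b c)).ex := by
    ext x
    simp only [mem_comp_ex]
    constructor
    · rintro ⟨hc, hb, ha⟩
      exact ⟨⟨hc, hb⟩, by rwa [comp_toFun_of_mem (Or.inl ⟨hc, hb⟩)]⟩
    · rintro ⟨⟨hc, hb⟩, ha⟩
      exact ⟨hc, hb, by rwa [comp_toFun_of_mem (Or.inl ⟨hc, hb⟩)] at ha⟩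
  have hfr : (comp (comp a b) c).fr = (comp a (comp b c)).fr := by
    ext x
    simp only [mem_comp_fr]
    constructor
    · rintro ⟨hc, hb, ha⟩
      exact ⟨⟨hc, hb⟩, by rwa [comp_toFun_of_mem (Or.inr ⟨hc, hb⟩)]⟩
    · rintro ⟨⟨hc, hb⟩, ha⟩
      exact ⟨hc, hb, by rwa [comp_toFun_of_mem (Or.inr ⟨hc, hb⟩)] at ha⟩
  refine ext hex hfr (funext fun x => ?_)
  by_cases hx : x ∈ (comp (comp a b) c).ex ∪ (comp (comp a b) c).fr
  · have hx' : x ∈ (comp a (comp b c)).ex ∪ (comp a (comp b c)).fr := hex ▸ hfr ▸ hx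
    have hbc : x ∈ (comp b c).ex ∪ (comp b c).fr :=
      hx.imp (fun h => ⟨h.1, h.2.1⟩) (fun h => ⟨h.1, h.2.1⟩)
    have hab : c.toFun x ∈ (comp a b).ex ∪ (comp a b).fr := hx.imp And.right And.right
    rw [comp_toFun_of_mem hx, comp_toFun_of_mem hab, comp_toFun_of_mem hx',
      comp_toFun_of_mem hbc]
  · have hx' : x ∉ (comp a (comp b c)).ex ∪ (comp a (comp b c)).fr := hex ▸ hfr ▸ hx
    rw [eq_outside _ x hx, eq_outside _ x hx']

theorem glR_of_eq_comp {a b : BiMap X} (x y : BiMap X) (hx : a = comp b x) (hy : b = comp a y) :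
    glR a b := by
  unfold glR
  ext h
  simp only [Set.mem_union, Set.mem_ofPred_eq, Set.mem_singleton_iff]
  constructor
  · rintro (⟨s, rfl⟩ | rfl)
    · exact Or.inl ⟨comp x s, by rw [hx, comp_assoc]⟩
    · exact Or.inl ⟨x, hx⟩
  · rintro (⟨s, rfl⟩ | rfl)
    · exact Or.inl ⟨comp y s, by rw [hy, comp_assoc]⟩
    · exact Or.inl ⟨y, hy⟩

theorem glR_comp_of_comp_comp_eq {g h : BiMap X} (hreg : comp (comp g h) g = g) :
    glR (comp g h) g :=
  glR_of_eq_comp h g rfl hreg.symm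

theorem pid_comp_of_mapsTo {f : BiMap X} {Aex Afr : Set X} (hd : Aex ∩ Afr = ∅)
    (hex : Set.MapsTo f.toFun f.ex Aex) (hfr : Set.MapsTo f.toFun f.fr Afr) :
    comp (pid Aex Afr hd) f = f := by
  ext x
  · exact ⟨And.left, fun h => ⟨h, hex h⟩⟩
  · exact ⟨And.left, fun h => ⟨h, hfr h⟩⟩
  · by_cases hx : x ∈ f.ex ∪ f.fr
    · exact comp_toFun_of_mem (g := pid Aex Afr hd)
        (hx.imp (fun h => ⟨h, hex h⟩) (fun h => ⟨h, hfr h⟩))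
    · rw [eq_outside (comp (pid Aex Afr hd) f) x (fun h => hx (h.imp And.left And.left)),
        f.eq_outside x hx]

theorem pid_comp_pid (Aex Afr : Set X) (hd : Aex ∩ Afr = ∅) :
    comp (pid Aex Afr hd) (pid Aex Afr hd) = pid Aex Afr hd :=
  pid_comp_of_mapsTo hd (Set.mapsTo_id _) (Set.mapsTo_id _)

theorem comp_pid_of_subset {f : BiMap X} {Aex Afr : Set X} (hd : Aex ∩ Afr = ∅)
    (hex : Aex ⊆ f.ex) (hfr : Afr ⊆ f.fr) (hfix : ∀ x ∈ Aex ∪ Afr, f.toFun x = x) :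
    comp f (pid Aex Afr hd) = pid Aex Afr hd := by
  ext x
  · exact ⟨And.left, fun h => ⟨h, hex h⟩⟩
  · exact ⟨And.left, fun h => ⟨h, hfr h⟩⟩
  · by_cases hx : x ∈ Aex ∪ Afr
    · exact (comp_toFun_of_mem (g := f) (f := pid Aex Afr hd)
        (hx.imp (fun h => ⟨h, hex h⟩) (fun h => ⟨h, hfr h⟩))).trans (hfix x hx)
    · exact eq_outside (comp f (pid Aex Afr hd)) x (fun h => hx (h.imp And.left And.left))

section Idempotent

variable {e : BiMap X}

theorem mapsTo_ex_of_comp_self_eq (he : comp e e = e) : Set.MapsTo e.toFun e.ex e.ex :=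
  fun x hx => (mem_comp_ex.mp ((congrArg BiMap.ex he).symm ▸ hx : x ∈ (comp e e).ex)).2

theorem mapsTo_fr_of_comp_self_eq (he : comp e e = e) : Set.MapsTo e.toFun e.fr e.fr :=
  fun x hx => (mem_comp_fr.mp ((congrArg BiMap.fr he).symm ▸ hx : x ∈ (comp e e).fr)).2

theorem toFun_toFun_of_comp_self_eq (he : comp e e = e) {x : X} (hx : x ∈ e.ex ∪ e.fr) :
    e.toFun (e.toFun x) = e.toFun x := by
  have hx' : x ∈ (comp e e).ex ∪ (comp e e).fr :=
    hx.imp (fun h => ⟨h, mapsTo_ex_of_comp_self_eq he h⟩)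
      (fun h => ⟨h, mapsTo_fr_of_comp_self_eq he h⟩)
  rw [← comp_toFun_of_mem hx', he]

theorem image_ex_inter_image_fr_of_comp_self_eq (he : comp e e = e) :
    e.toFun '' e.ex ∩ e.toFun '' e.fr = ∅ :=
  Set.subset_eq_empty (Set.inter_subset_inter (mapsTo_ex_of_comp_self_eq he).image_subset
    (mapsTo_fr_of_comp_self_eq he).image_subset) e.disj

theorem glR_pid_image_of_comp_self_eq (he : comp e e = e) :
    glR (pid _ _ (image_ex_inter_image_fr_of_comp_self_eq he)) e := by
  have hfix : ∀ x ∈ e.toFun '' e.ex ∪ e.toFun '' e.fr, e.toFun x = x := by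
    rintro _ (⟨y, hy, rfl⟩ | ⟨y, hy, rfl⟩)
    · exact toFun_toFun_of_comp_self_eq he (Or.inl hy)
    · exact toFun_toFun_of_comp_self_eq he (Or.inr hy)
  refine glR_of_eq_comp (pid _ _ (image_ex_inter_image_fr_of_comp_self_eq he)) e ?_ ?_
  · exact (comp_pid_of_subset _ (mapsTo_ex_of_comp_self_eq he).image_subset
      (mapsTo_fr_of_comp_self_eq he).image_subset hfix).symm
  · exact (pid_comp_of_mapsTo _ (Set.mapsTo_image _ _) (Set.mapsTo_image _ _)).symm

end Idempotent

end BiMap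

theorem BiMap.Rclass_regular_iff_pid_general {X : Type*} (f : BiMap X) :
    (∃ g : BiMap X, BiMap.glR g f ∧ ∃ h : BiMap X, BiMap.comp (BiMap.comp g h) g = g) ↔
    (∃ (Aex Afr : Set X) (hd : Aex ∩ Afr = ∅), BiMap.glR (BiMap.pid Aex Afr hd) f) := by
  constructor
  · rintro ⟨g, hgf, h, hreg⟩
    have hidem : BiMap.comp (BiMap.comp g h) (BiMap.comp g h) = BiMap.comp g h := by
      rw [← BiMap.comp_assoc, hreg]
    have hpe := BiMap.glR_pid_image_of_comp_self_eq hidem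
    exact ⟨_, _, _, hpe.trans ((BiMap.glR_comp_of_comp_comp_eq hreg).trans hgf)⟩
  · rintro ⟨Aex, Afr, hd, hpf⟩
    exact ⟨BiMap.pid Aex Afr hd, hpf, BiMap.pid Aex Afr hd, by
      rw [BiMap.pid_comp_pid, BiMap.pid_comp_pid]⟩

/-- An ℛ-class in the semigroup of bi-typed partial maps on a finite set is regular
iff it contains a partial identity. -/
theorem BiMap.Rclass_regular_iff_pid {X : Type*} [Finite X] (f : BiMap X) :
    (∃ g : BiMap X, BiMap.glR g f ∧ ∃ h : BiMap X, BiMap.comp (BiMap.comp g h) g = g) ↔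
    (∃ (Aex Afr : Set X) (hd : Aex ∩ Afr = ∅), BiMap.glR (BiMap.pid Aex Afr hd) f) :=
  BiMap.Rclass_regular_iff_pid_general f
end

section
/- Let S be a semigroup and e ∈ S an idempotent. Then the ℋ-class H_e of e is a group with identity element e under the multiplication of S. -/
section aux
variable {S : Type*} [Semigroup S]

lemma grL_of (e x : S) (h1 : ∃ s, x = s * e) (h2 : ∃ t, e = t * x) : grL x e := by
  obtain ⟨s, hs⟩ := h1; obtain ⟨t, ht⟩ := h2
  ext z
  simp only [grL, Set.mem_union, Set.mem_setOf_eq, Set.mem_singleton_iff]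
  constructor
  · rintro (⟨w, rfl⟩ | rfl)
    · exact Or.inl ⟨w * s, by rw [hs, mul_assoc]⟩
    · exact Or.inl ⟨s, hs⟩
  · rintro (⟨w, rfl⟩ | rfl)
    · exact Or.inl ⟨w * t, by rw [ht, mul_assoc]⟩
    · exact Or.inl ⟨t, ht⟩

lemma grR_of (e x : S) (h1 : ∃ s, x = e * s) (h2 : ∃ t, e = x * t) : grR x e := by
  obtain ⟨s, hs⟩ := h1; obtain ⟨t, ht⟩ := h2
  ext z
  simp only [grR, Set.mem_union, Set.mem_setOf_eq, Set.mem_singleton_iff]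
  constructor
  · rintro (⟨w, rfl⟩ | rfl)
    · exact Or.inl ⟨s * w, by rw [hs, mul_assoc]⟩
    · exact Or.inl ⟨s, hs⟩
  · rintro (⟨w, rfl⟩ | rfl)
    · exact Or.inl ⟨t * w, by rw [ht, mul_assoc]⟩
    · exact Or.inl ⟨t, ht⟩

lemma grH_props {e x : S} (he : e * e = e) (hx : grH x e) :
    x * e = x ∧ e * x = x ∧ (∃ t, t * x = e) ∧ (∃ u, x * u = e) := by
  obtain ⟨hL, hR⟩ := hx
  -- x ∈ Se ∪ {e}
  have hx1 : x ∈ ({z | ∃ s, z = s * e} ∪ {e} : Set S) := by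
    rw [← hL]; exact Or.inr rfl
  -- e ∈ Sx ∪ {x}
  have he1 : e ∈ ({z | ∃ s, z = s * x} ∪ {x} : Set S) := by
    rw [hL]; exact Or.inr rfl
  have hx2 : x ∈ ({z | ∃ s, z = e * s} ∪ {e} : Set S) := by
    rw [← hR]; exact Or.inr rfl
  have he2 : e ∈ ({z | ∃ s, z = x * s} ∪ {x} : Set S) := by
    rw [hR]; exact Or.inr rfl
  have hxe : x * e = x := by
    rcases hx1 with ⟨s, rfl⟩ | rfl
    · rw [mul_assoc, he]
    · exact he
  have hex : e * x = x := by
    rcases hx2 with ⟨s, rfl⟩ | rfl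
    · rw [← mul_assoc, he]
    · exact he
  refine ⟨hxe, hex, ?_, ?_⟩
  · rcases he1 with ⟨t, ht⟩ | h
    · exact ⟨t, ht.symm⟩
    · exact ⟨e, by rw [← h, he]⟩
  · rcases he2 with ⟨u, hu⟩ | h
    · exact ⟨u, hu.symm⟩
    · exact ⟨e, by rw [← h, he]⟩

lemma grH_inv {e x : S} (he : e * e = e) (hx : grH x e) :
    ∃ y, grH y e ∧ x * y = e ∧ y * x = e := by
  obtain ⟨hxe, hex, ⟨t, ht⟩, ⟨u, hu⟩⟩ := grH_props he hx
  set a := e * t * e with ha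
  set b := e * u * e with hb
  have hax : a * x = e := by
    rw [ha, mul_assoc, mul_assoc, hex, ht, he]
  have hxb : x * b = e := by
    rw [hb, ← mul_assoc, ← mul_assoc, hxe, hu, he]
  have hab : a = b := by
    have h1 : a * e = a := by rw [ha, mul_assoc, mul_assoc, he, ← mul_assoc]
    have h2 : e * b = b := by rw [hb, ← mul_assoc, ← mul_assoc, he]
    calc a = a * e := h1.symm
      _ = a * (x * b) := by rw [hxb]
      _ = a * x * b := (mul_assoc a x b).symm
      _ = e * b := by rw [hax]
      _ = b := h2
  have hxa : x * a = e := by rw [hab]; exact hxb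
  refine ⟨a, ⟨?_, ?_⟩, hxa, hax⟩
  · exact grL_of e a ⟨e * t, rfl⟩ ⟨x, hxa.symm⟩
  · exact grR_of e a ⟨t * e, by rw [ha, mul_assoc]⟩ ⟨x, hax.symm⟩

end aux

/-- The ℋ-class of an idempotent `e` is a group with identity `e`. -/
theorem Hclass_of_idempotent_is_group {S : Type*} [Semigroup S] (e : S) (he : e * e = e) :
    e ∈ {x | grH x e} ∧
    (∀ x ∈ {x | grH x e}, ∀ y ∈ {x | grH x e}, x * y ∈ {x | grH x e}) ∧
    (∀ x ∈ {x | grH x e}, e * x = x ∧ x * e = x) ∧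
    (∀ x ∈ {x | grH x e}, ∃ y ∈ {x | grH x e}, x * y = e ∧ y * x = e) := by
  refine ⟨⟨rfl, rfl⟩, ?_, ?_, ?_⟩
  · intro x hx y hy
    obtain ⟨hxe, hex, _, _⟩ := grH_props he hx
    obtain ⟨hye, hey, _, _⟩ := grH_props he hy
    obtain ⟨x', hx'H, hxx', hx'x⟩ := grH_inv he hx
    obtain ⟨y', hy'H, hyy', hy'y⟩ := grH_inv he hy
    obtain ⟨_, hex', _, _⟩ := grH_props he hx'H
    constructor
    · refine grL_of e (x * y) ⟨x * y, by rw [mul_assoc, hye]⟩ ⟨y' * x', ?_⟩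
      rw [mul_assoc, ← mul_assoc x', hx'x, hey, hy'y]
    · refine grR_of e (x * y) ⟨x * y, by rw [← mul_assoc, hex]⟩ ⟨y' * x', ?_⟩
      rw [mul_assoc, ← mul_assoc y, hyy', hex', hxx']
  · intro x hx
    obtain ⟨hxe, hex, _, _⟩ := grH_props he hx
    exact ⟨hex, hxe⟩
  · intro x hx
    obtain ⟨y, hyH, hxy, hyx⟩ := grH_inv he hx
    exact ⟨y, hyH, hxy, hyx⟩
end
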